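/- For a Grothendieck topos E the following are equivalent: (1) every subobject of every object of E is complemented; (2) every object of E is decidable. -/

import Mathlib

/-!
Formalisation of a statement from "On the profinite fundamental group of a
connected Grothendieck topos" (Berger–Iwaniack).  A Grothendieck topos is
modelled as `Sheaf J (Type u)` for a small site `(C, J)`.
-/

open CategoryTheory CategoryTheory.Limits

universe u

instance sheafTypeHasColimits {C : Type u} [SmallCategory C] (J : GrothendieckTopology C) :
    HasColimitsOfSize.{u, u} (Sheaf J (Type u)) :=
  @CategoryTheory.Sheaf.instHasColimitsOfSize _ _ J (Type u) _ _ _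

/-- A subobject `s` of `X` is complemented if it has a complement in the
subobject lattice of `X`. -/
def IsComplementedSub {C : Type u} [SmallCategory C] {J : GrothendieckTopology C}
    {X : Sheaf J (Type u)} (s : Subobject X) : Prop :=
  ∃ t : Subobject X, s ⊓ t = ⊥ ∧ s ⊔ t = ⊤

/-- An object is decidable if its diagonal, regarded as a subobject of `X ⨯ X`,
is complemented. -/
def IsDecidableObj {C : Type u} [SmallCategory C] {J : GrothendieckTopology C}
    (X : Sheaf J (Type u)) : Prop :=
  IsComplementedSub (Subobject.mk (diag X))

/-- An object is connected if it is not initial and its only complemented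
subobjects are `⊥` and `⊤`. -/
def IsConnectedObj {C : Type u} [SmallCategory C] {J : GrothendieckTopology C}
    (X : Sheaf J (Type u)) : Prop :=
  (¬ Nonempty (IsInitial X)) ∧
    ∀ s : Subobject X, IsComplementedSub s → s = ⊥ ∨ s = ⊤

/-- An object is locally connected if it is (isomorphic to) a coproduct of
connected objects. -/
def IsLocallyConnectedObj {C : Type u} [SmallCategory C] {J : GrothendieckTopology C}
    (X : Sheaf J (Type u)) : Prop :=
  ∃ (I : Type u) (Z : I → Sheaf J (Type u)),
    (∀ i, IsConnectedObj (Z i)) ∧ Nonempty (X ≅ ∐ Z)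

/-- An object is locally constant if it is trivialised, with constant fibres,
by some cover of the terminal object. -/
def IsLocallyConstantObj {C : Type u} [SmallCategory C] {J : GrothendieckTopology C}
    (X : Sheaf J (Type u)) : Prop :=
  ∃ (I : Type u) (U : I → Sheaf J (Type u)),
    Epi (terminal.from (∐ U)) ∧
    ∀ i, ∃ (S : Type u)
      (e : X ⨯ U i ≅ (constantSheaf J (Type u)).obj S ⨯ U i),
      e.hom ≫ Limits.prod.snd = Limits.prod.snd

/-- An object is locally finite if it is trivialised, with finite constant
fibres, by some cover of the terminal object. -/
def IsLocallyFiniteObj {C : Type u} [SmallCategory C] {J : GrothendieckTopology C}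
    (X : Sheaf J (Type u)) : Prop :=
  ∃ (I : Type u) (U : I → Sheaf J (Type u)),
    Epi (terminal.from (∐ U)) ∧
    ∀ i, ∃ (n : ℕ)
      (e : X ⨯ U i ≅ (constantSheaf J (Type u)).obj (ULift.{u} (Fin n)) ⨯ U i),
      e.hom ≫ Limits.prod.snd = Limits.prod.snd

/-- An object is finite if it is locally finite and a finite coproduct of
connected objects. -/
def IsFiniteObj {C : Type u} [SmallCategory C] {J : GrothendieckTopology C}
    (X : Sheaf J (Type u)) : Prop :=
  IsLocallyFiniteObj X ∧
    ∃ (n : ℕ) (Z : Fin n → Sheaf J (Type u)),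
      (∀ k, IsConnectedObj (Z k)) ∧ Nonempty (X ≅ ∐ Z)

/-- An object is a sum of finite objects if it is isomorphic to a coproduct of
finite objects. -/
def IsSumOfFiniteObj {C : Type u} [SmallCategory C] {J : GrothendieckTopology C}
    (X : Sheaf J (Type u)) : Prop :=
  ∃ (I : Type u) (Z : I → Sheaf J (Type u)),
    (∀ i, IsFiniteObj (Z i)) ∧ Nonempty (X ≅ ∐ Z)

/-- A Galois object: a connected, globally supported object `A` such that the
canonical morphism `∐_{g ∈ Aut A} A ⟶ A ⨯ A` is an isomorphism. -/
def IsGaloisObj {C : Type u} [SmallCategory C] {J : GrothendieckTopology C}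
    (A : Sheaf J (Type u)) : Prop :=
  IsConnectedObj A ∧ Epi (terminal.from A) ∧
    IsIso (Sigma.desc (f := fun _ : Aut A => A)
      (fun g => Limits.prod.lift (𝟙 A) g.hom))

/-!
Glue two copies of `X` along a subobject `s` to get the double `P = X ⊔_s X`. In an adhesive
category this pushout square is also a pullback, so `s` is the equalizer of the two inclusions
`X ⇉ P`, i.e. the pullback of the diagonal of `P` along `⟨inl, inr⟩ : X ⟶ P ⨯ P`.
A complemented pair of subobjects is the same as a binary coproduct decomposition, and coproduct
decompositions are stable under pullback in an extensive category; so a complement of the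
diagonal of `P` pulls back to a complement of `s`.
-/

namespace CategoryTheory

variable {D : Type*} [Category D]

lemma IsPullback.prodLift_diag {S X P : D} {a : S ⟶ X} {f g : X ⟶ P} [HasBinaryProduct P P]
    (h : IsPullback a a f g) : IsPullback a (a ≫ f) (prod.lift f g) (diag P) := by
  refine ⟨⟨by ext <;> simp [h.w]⟩, ⟨PullbackCone.IsLimit.mk _ (fun s ↦ h.lift s.fst s.fst ?_)
    (fun s ↦ h.lift_fst _ _ _) (fun s ↦ ?_)
    (fun s m hm _ ↦ h.hom_ext (by simpa using hm) (by simpa using hm))⟩⟩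
  · have hf := s.condition =≫ prod.fst
    have hg := s.condition =≫ prod.snd
    simp only [Category.assoc, prod.lift_fst, prod.lift_snd, Category.comp_id] at hf hg
    exact hf.trans hg.symm
  · have hf := s.condition =≫ prod.fst
    simp only [Category.assoc, prod.lift_fst, Category.comp_id] at hf
    rw [h.lift_fst_assoc, hf]

lemma Adhesive.exists_pullback_diag_eq [Adhesive D] [HasBinaryProducts D] [HasPullbacks D]
    {X : D} (s : Subobject X) :
    ∃ (P : D) (k : X ⟶ P ⨯ P), (Subobject.pullback k).obj (Subobject.mk (diag P)) = s := by
  have hdouble := IsPushout.of_hasPushout s.arrow s.arrow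
  refine ⟨_, prod.lift (pushout.inl s.arrow s.arrow) (pushout.inr _ _), ?_⟩
  rw [Subobject.pullback_obj_mk
    (Adhesive.isPullback_of_isPushout_of_mono_left hdouble).prodLift_diag.flip,
    Subobject.mk_arrow]

namespace Subobject

variable [FinitaryExtensive D] [HasPullbacks D] [HasImages D] {X : D} {a b : Subobject X}

lemma isCompl_of_isColimit_binaryCofan (hc : IsColimit (BinaryCofan.mk a.arrow b.arrow)) :
    IsCompl a b := by
  have hdisj : IsPullback (initial.to (a : D)) (initial.to (b : D)) a.arrow b.arrow :=
    FinitaryExtensive.isPullback_initial_to_binaryCofan hc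
  refine ⟨disjoint_iff_inf_le.2 ?_, codisjoint_iff_le_sup.2 ?_⟩
  · rw [bot_eq_initial_to]
    refine le_mk_of_comm (hdisj.lift (ofLE _ _ _root_.inf_le_left) (ofLE _ _ _root_.inf_le_right)
      (inf_isPullback a b).w) ?_
    rw [← initial.to_comp a.arrow, ← Category.assoc, hdisj.lift_fst, ofLE_arrow]
  · rw [top_eq_id]
    refine mk_le_of_comm (BinaryCofan.IsColimit.desc hc
      ((a ⊔ b).factorThru a.arrow (sup_factors_of_factors_left (factors_self a)))
      ((a ⊔ b).factorThru b.arrow (sup_factors_of_factors_right (factors_self b)))) ?_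
    apply BinaryCofan.IsColimit.hom_ext hc
    · exact (BinaryCofan.IsColimit.inl_desc_assoc hc _ _ _).trans
        ((factorThru_arrow _ _ _).trans (Category.comp_id _).symm)
    · exact (BinaryCofan.IsColimit.inr_desc_assoc hc _ _ _).trans
        ((factorThru_arrow _ _ _).trans (Category.comp_id _).symm)

/-- The union of two subobjects of an object of an adhesive category is their pushout over their
intersection; here the intersection is initial, so the pushout is a coproduct. -/
lemma nonempty_isColimit_binaryCofan_of_isCompl [Adhesive D] (h : IsCompl a b) :
    Nonempty (IsColimit (BinaryCofan.mk a.arrow b.arrow)) := by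
  have hinitial : IsInitial (Limits.pullback a.arrow b.arrow) :=
    IsInitial.ofStrict ((inf_isPullback a b).lift _ _ Limits.pullback.condition ≫
      ofLE _ _ h.disjoint.eq_bot.le ≫ botCoeIsoInitial.hom) initialIsInitial
  have hcoprod := isCoproductOfIsInitialIsPushout _ _ _ _ hinitial
    (IsPushout.of_hasPushout (Limits.pullback.fst a.arrow b.arrow)
      (Limits.pullback.snd _ _)).isColimit
  have hl := pushout.inl_desc a.arrow b.arrow Limits.pullback.condition
  have hr := pushout.inr_desc a.arrow b.arrow Limits.pullback.condition
  have hunion : IsIso (pushout.desc a.arrow b.arrow Limits.pullback.condition) := by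
    rw [isIso_iff_mk_eq_top, eq_top_iff, ← h.codisjoint.eq_top]
    exact sup_le (le_mk_of_comm _ hl) (le_mk_of_comm _ hr)
  exact ⟨hcoprod.ofIsoColimit (BinaryCofan.ext (c' := BinaryCofan.mk a.arrow b.arrow)
    (@asIso _ _ _ _ _ hunion) hl hr)⟩

lemma isCompl_pullback_obj [Adhesive D] {Y : D} (k : Y ⟶ X) (h : IsCompl a b) :
    IsCompl ((pullback k).obj a) ((pullback k).obj b) := by
  obtain ⟨hc⟩ := nonempty_isColimit_binaryCofan_of_isCompl h
  have hvk := (BinaryCofan.isVanKampen_iff _).1 (FinitaryExtensive.vanKampen _ hc)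
    (BinaryCofan.mk ((pullback k).obj a).arrow ((pullback k).obj b).arrow) _ _ k
    (isPullback k a).w (isPullback k b).w
  exact isCompl_of_isColimit_binaryCofan
    (hvk.2 ⟨(isPullback k a).flip, (isPullback k b).flip⟩).some

end Subobject

end CategoryTheory

lemma isComplementedSub_iff_isComplemented {C : Type u} [SmallCategory C]
    {J : GrothendieckTopology C} {X : Sheaf J (Type u)} (s : Subobject X) :
    IsComplementedSub s ↔ IsComplemented s := by
  simp only [IsComplementedSub, IsComplemented, isCompl_iff, disjoint_iff, codisjoint_iff]

/-- in a Grothendieck topos, all subobjects of all objects are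
complemented if and only if all objects are decidable. -/
theorem allComplemented_iff_allDecidable
    {C : Type u} [SmallCategory C] (J : GrothendieckTopology C) :
    (∀ (X : Sheaf J (Type u)) (s : Subobject X), IsComplementedSub s) ↔
      (∀ X : Sheaf J (Type u), IsDecidableObj X) := by
  refine ⟨fun h X ↦ h _ _, fun hdec X s ↦ ?_⟩
  obtain ⟨P, k, rfl⟩ := Adhesive.exists_pullback_diag_eq s
  obtain ⟨_, hcompl⟩ := (isComplementedSub_iff_isComplemented _).1 (hdec P)
  exact (isComplementedSub_iff_isComplemented _).2 ⟨_, Subobject.isCompl_pullback_obj k hcompl⟩
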